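/- In the MICD AL model, E_0[a_θ(X,Y)] = θ³/12 and E_θ[a_θ(X,Y)] = (3-θ)θ²/12 for θ ∈ (0,1), so the ratio E_θ[a_θ(X,Y)]/E_0[a_θ(X,Y)] = (3-θ)/θ → ∞ as θ ↓ 0. -/

import Mathlib

open MeasureTheory Set Filter Topology

/-!
On the square `[-1/2, 1/2]²` the joint cdf of the model is
`F_θ(x, y) = G(x) G(y) / (1 - θ) + H(min x y)`, where `H(t) = |[-θ/2, θ/2] ∩ (-∞, t]|`
(`diagCdf`) is the diagonal mass below `t` and `G(t) = t + 1/2 - H(t)` (`offCdf`) is the length of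
the off-diagonal support below `t`; `assocFormula` is `F_θ - F_0` written this way, and agrees with
`a_θ` only on the square.

Under `E_0` the product terms integrate factor by factor, and `H(min X Y)` is integrated against
the density of the minimum of two independent uniforms. Under `E_θ`, `H` takes only the values `0`
and `θ` on the off-diagonal support, so there `H(min x y) = H(x) H(y) / θ`: the integral factorises
again and vanishes, leaving the diagonal contribution `∫_{-θ/2}^{θ/2} (θ/4 - u²) du`.
-/

/-- The MICD AL model for `θ ∈ (0,1)`: the mixture whose expectation is
`E_θ g(X,Y) = (1/(1-θ))·∫∫_{[-1/2,1/2]²} g(u,v)·1{|u|∧|v| > θ/2} du dv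
 + ∫_{-θ/2}^{θ/2} g(u,u) du`. -/
noncomputable def ALmeasure (θ : ℝ) : Measure (ℝ × ℝ) :=
  (ENNReal.ofReal (1 - θ))⁻¹ •
    volume.restrict {p : ℝ × ℝ | p.1 ∈ Icc (-(1/2):ℝ) (1/2) ∧ p.2 ∈ Icc (-(1/2):ℝ) (1/2)
      ∧ θ/2 < |p.1| ∧ θ/2 < |p.2|}
  + Measure.map (fun u : ℝ => (u, u)) (volume.restrict (Icc (-(θ/2)) (θ/2)))

/-- The independence (θ = 0) measure: uniform on `[-1/2,1/2]²`. -/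
noncomputable def ALmeasure0 : Measure (ℝ × ℝ) :=
  volume.restrict (Icc (-(1/2):ℝ) (1/2) ×ˢ Icc (-(1/2):ℝ) (1/2))

/-- The association function `a_θ = F_θ - F_0` of the MICD AL model. -/
noncomputable def ALassoc (θ : ℝ) (p : ℝ × ℝ) : ℝ :=
  (ALmeasure θ (Iic p.1 ×ˢ Iic p.2)).toReal - (ALmeasure0 (Iic p.1 ×ˢ Iic p.2)).toReal

local notation "𝕀" => Icc (-(1/2) : ℝ) (1/2)

noncomputable def diagCdf (θ t : ℝ) : ℝ := max (min t (θ / 2) + θ / 2) 0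

noncomputable def offCdf (θ t : ℝ) : ℝ := t + 1 / 2 - diagCdf θ t

def offSupport (θ : ℝ) : Set ℝ := 𝕀 \ Icc (-(θ / 2)) (θ / 2)

noncomputable def assocFormula (θ : ℝ) (p : ℝ × ℝ) : ℝ :=
  offCdf θ p.1 * offCdf θ p.2 / (1 - θ) + diagCdf θ (min p.1 p.2) - (p.1 + 1 / 2) * (p.2 + 1 / 2)

section cdf

variable {θ t : ℝ}

lemma diagCdf_nonneg (θ t : ℝ) : 0 ≤ diagCdf θ t := le_max_right _ _

lemma diagCdf_of_le (ht : t ≤ -(θ / 2)) : diagCdf θ t = 0 :=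
  max_eq_right (by linarith [min_le_left t (θ / 2)])

lemma diagCdf_of_mem (ht : t ∈ Icc (-(θ / 2)) (θ / 2)) : diagCdf θ t = t + θ / 2 := by
  rw [diagCdf, min_eq_left ht.2, max_eq_left (by linarith [ht.1])]

lemma diagCdf_of_ge (hθ : 0 ≤ θ) (ht : θ / 2 ≤ t) : diagCdf θ t = θ := by
  rw [diagCdf, min_eq_right ht, max_eq_left (by linarith)]
  ring

@[fun_prop]
lemma continuous_diagCdf (θ : ℝ) : Continuous (diagCdf θ) := by
  unfold diagCdf
  fun_prop

@[fun_prop]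
lemma continuous_offCdf (θ : ℝ) : Continuous (offCdf θ) := by
  unfold offCdf
  fun_prop

@[fun_prop]
lemma continuous_assocFormula (θ : ℝ) : Continuous (assocFormula θ) := by
  unfold assocFormula
  fun_prop

lemma offCdf_nonneg (hθ : θ ≤ 1) (ht : -(1 / 2) ≤ t) : 0 ≤ offCdf θ t := by
  have : diagCdf θ t ≤ t + 1 / 2 :=
    max_le (by linarith [min_le_left t (θ / 2)]) (by linarith)
  rw [offCdf]
  linarith

lemma Iic_inter_Icc_eq (t a b : ℝ) : Iic t ∩ Icc a b = Icc a (min t b) := by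
  ext u
  simp only [mem_inter_iff, mem_Iic, mem_Icc, le_min_iff]
  tauto

lemma volume_Iic_inter_Icc (t a b : ℝ) :
    volume (Iic t ∩ Icc a b) = ENNReal.ofReal (min t b - a) := by
  rw [Iic_inter_Icc_eq, Real.volume_Icc]

lemma volume_Iic_inter_diag (θ t : ℝ) :
    volume (Iic t ∩ Icc (-(θ / 2)) (θ / 2)) = ENNReal.ofReal (diagCdf θ t) := by
  rw [volume_Iic_inter_Icc, diagCdf, ENNReal.ofReal_max, ENNReal.ofReal_zero,
    max_eq_left zero_le, sub_neg_eq_add]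

lemma volume_Iic_inter_offSupport (hθ : θ ≤ 1) (ht : t ≤ 1 / 2) :
    volume (Iic t ∩ offSupport θ) = ENNReal.ofReal (offCdf θ t) := by
  have hsub : Iic t ∩ Icc (-(θ / 2)) (θ / 2) ⊆ Iic t ∩ 𝕀 :=
    inter_subset_inter_right _ (Icc_subset_Icc (by linarith) (by linarith))
  rw [offSupport, inter_sdiff_distrib_left, measure_sdiff hsub
      (measurableSet_Iic.inter measurableSet_Icc).nullMeasurableSet
      (measure_ne_top_of_subset inter_subset_right measure_Icc_lt_top.ne),
    volume_Iic_inter_diag θ t, volume_Iic_inter_Icc, min_eq_left ht, sub_neg_eq_add,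
    ← ENNReal.ofReal_sub _ (diagCdf_nonneg θ t), offCdf]

end cdf

lemma ALmeasure0_eq_prod :
    ALmeasure0 = (volume.restrict 𝕀).prod (volume.restrict 𝕀) := by
  rw [ALmeasure0, Measure.prod_restrict, Measure.volume_eq_prod]

lemma ALmeasure_eq (θ : ℝ) :
    ALmeasure θ = (ENNReal.ofReal (1 - θ))⁻¹ • volume.restrict (offSupport θ ×ˢ offSupport θ)
      + Measure.map (fun u : ℝ => (u, u)) (volume.restrict (Icc (-(θ / 2)) (θ / 2))) := by
  have hdiag {θ u : ℝ} : θ / 2 < |u| ↔ u ∉ Icc (-(θ / 2)) (θ / 2) := by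
    rw [mem_Icc, ← abs_le, not_le]
  rw [ALmeasure]
  congr 4
  refine Set.ext fun p => ?_
  show _ ∧ _ ∧ _ ∧ _ ↔ _
  simp only [mem_prod, offSupport, Set.mem_sdiff, hdiag]
  tauto

lemma ALmeasure0_Iic_prod {x y : ℝ} (hx : x ∈ 𝕀) (hy : y ∈ 𝕀) :
    (ALmeasure0 (Iic x ×ˢ Iic y)).toReal = (x + 1 / 2) * (y + 1 / 2) := by
  rw [ALmeasure0_eq_prod, Measure.prod_prod, Measure.restrict_apply measurableSet_Iic,
    Measure.restrict_apply measurableSet_Iic, volume_Iic_inter_Icc, volume_Iic_inter_Icc,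
    min_eq_left hx.2, min_eq_left hy.2, ENNReal.toReal_mul,
    ENNReal.toReal_ofReal (by linarith [hx.1]), ENNReal.toReal_ofReal (by linarith [hy.1]),
    sub_neg_eq_add, sub_neg_eq_add]

lemma ALmeasure_Iic_prod {θ x y : ℝ} (hθ : θ < 1) (hx : x ∈ 𝕀) (hy : y ∈ 𝕀) :
    (ALmeasure θ (Iic x ×ˢ Iic y)).toReal
      = offCdf θ x * offCdf θ y / (1 - θ) + diagCdf θ (min x y) := by
  have hdiag : (fun u : ℝ => (u, u)) ⁻¹' (Iic x ×ˢ Iic y) = Iic (min x y) := by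
    ext u
    simp
  have hmeas : MeasurableSet (Iic x ×ˢ Iic y) := measurableSet_Iic.prod measurableSet_Iic
  rw [ALmeasure_eq, Measure.add_apply, Measure.smul_apply, Measure.restrict_apply hmeas,
    prod_inter_prod, Measure.volume_eq_prod, Measure.prod_prod,
    volume_Iic_inter_offSupport hθ.le hx.2, volume_Iic_inter_offSupport hθ.le hy.2,
    Measure.map_apply (by fun_prop) hmeas, hdiag,
    Measure.restrict_apply measurableSet_Iic, volume_Iic_inter_diag, smul_eq_mul,
    ENNReal.toReal_add (by finiteness) ENNReal.ofReal_ne_top, ENNReal.toReal_mul,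
    ENNReal.toReal_mul, ENNReal.toReal_inv, ENNReal.toReal_ofReal (by linarith),
    ENNReal.toReal_ofReal (offCdf_nonneg hθ.le hx.1),
    ENNReal.toReal_ofReal (offCdf_nonneg hθ.le hy.1),
    ENNReal.toReal_ofReal (diagCdf_nonneg θ _)]
  ring

lemma ALassoc_eq_assocFormula {θ : ℝ} (hθ : θ < 1) {p : ℝ × ℝ} (hp : p ∈ 𝕀 ×ˢ 𝕀) :
    ALassoc θ p = assocFormula θ p := by
  rw [ALassoc, ALmeasure_Iic_prod hθ hp.1 hp.2, ALmeasure0_Iic_prod hp.1 hp.2, assocFormula]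

section integrals

open intervalIntegral

lemma integral_quadratic_of_eqOn {f : ℝ → ℝ} {a b : ℝ} (c₀ c₁ c₂ : ℝ)
    (hf : EqOn f (fun t => c₀ + c₁ * t + c₂ * t ^ 2) (uIcc a b)) :
    ∫ t in a..b, f t = c₀ * (b - a) + c₁ * (b ^ 2 - a ^ 2) / 2 + c₂ * (b ^ 3 - a ^ 3) / 3 := by
  have hi : ∀ g : ℝ → ℝ, Continuous g → IntervalIntegrable g volume a b :=
    fun g hg => hg.intervalIntegrable a b
  rw [integral_congr hf, integral_add (hi _ (by fun_prop)) (hi _ (by fun_prop)),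
    integral_add (hi _ (by fun_prop)) (hi _ (by fun_prop)), intervalIntegral.integral_const,
    intervalIntegral.integral_const_mul, intervalIntegral.integral_const_mul, integral_id,
    integral_pow, smul_eq_mul]
  ring

lemma setIntegral_Icc_eq_intervalIntegral {f : ℝ → ℝ} {a b : ℝ} (hab : a ≤ b) :
    ∫ t in Icc a b, f t = ∫ t in a..b, f t := by
  rw [integral_Icc_eq_integral_Ioc, integral_of_le hab]

lemma integral_comp_min_left {h : ℝ → ℝ} (hh : Continuous h) {a b x : ℝ} (hx : x ∈ Icc a b) :
    ∫ y in a..b, h (min x y) = (∫ y in a..x, h y) + (b - x) * h x := by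
  have hi : ∀ c d, IntervalIntegrable (fun y => h (min x y)) volume c d :=
    fun c d => (by fun_prop : Continuous fun y => h (min x y)).intervalIntegrable c d
  rw [← integral_add_adjacent_intervals (hi a x) (hi x b),
    integral_congr (a := a) (g := h) fun y hy => by rw [min_eq_right (uIcc_of_le hx.1 ▸ hy).2],
    integral_congr (a := x) (g := fun _ => h x) fun y hy => by
      rw [min_eq_left (uIcc_of_le hx.2 ▸ hy).1],
    intervalIntegral.integral_const, smul_eq_mul]

/-- Cauchy's formula for repeated integration. -/
lemma integral_integral_eq_integral_sub_mul {h : ℝ → ℝ} (hh : Continuous h) (a b : ℝ) :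
    ∫ x in a..b, ∫ y in a..x, h y = ∫ s in a..b, (b - s) * h s := by
  have hu : ∀ x ∈ uIcc a b, HasDerivAt (fun x => ∫ y in a..x, h y) (h x) x := fun x _ =>
    integral_hasDerivAt_right (hh.intervalIntegrable _ _)
      hh.aestronglyMeasurable.stronglyMeasurableAtFilter hh.continuousAt
  have hv : ∀ x ∈ uIcc a b, HasDerivAt (fun x => x - b) 1 x := fun x _ =>
    (hasDerivAt_id x).sub_const b
  have hparts := integral_mul_deriv_eq_deriv_mul hu hv (hh.intervalIntegrable _ _)
    intervalIntegrable_const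
  simp only [mul_one, sub_self, mul_zero, integral_same, zero_mul, zero_sub] at hparts
  rw [hparts, ← intervalIntegral.integral_neg]
  congr 1 with s
  ring

/-- The minimum of two independent uniform variables on `[a, b]` has density
`2 (b - s) / (b - a) ^ 2`. -/
lemma integral_integral_comp_min {h : ℝ → ℝ} (hh : Continuous h) {a b : ℝ} (hab : a ≤ b) :
    ∫ x in a..b, ∫ y in a..b, h (min x y) = 2 * ∫ s in a..b, (b - s) * h s := by
  have hprim : Continuous fun x => ∫ y in a..x, h y :=
    continuous_primitive (fun _ _ => hh.intervalIntegrable _ _) a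
  rw [integral_congr fun x hx => integral_comp_min_left hh (uIcc_of_le hab ▸ hx),
    integral_add (hprim.intervalIntegrable _ _) ((by fun_prop : Continuous
      fun x => (b - x) * h x).intervalIntegrable _ _),
    integral_integral_eq_integral_sub_mul hh]
  ring

end integrals

section diagCdf_integrals

open intervalIntegral

variable {θ : ℝ}

lemma integral_mul_diagCdf (hθ₀ : 0 ≤ θ) (hθ₁ : θ ≤ 1) {p : ℝ → ℝ} (hp : Continuous p) :
    ∫ t in -(1 / 2)..1 / 2, p t * diagCdf θ t
      = (∫ t in -(θ / 2)..θ / 2, p t * (t + θ / 2)) + θ * ∫ t in θ / 2..1 / 2, p t := by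
  have hi : ∀ c d, IntervalIntegrable (fun t => p t * diagCdf θ t) volume c d :=
    fun c d => (by fun_prop : Continuous fun t => p t * diagCdf θ t).intervalIntegrable c d
  have h₁ : -(1 / 2) ≤ -(θ / 2) := by linarith
  have h₂ : -(θ / 2) ≤ θ / 2 := by linarith
  have h₃ : θ / 2 ≤ 1 / 2 := by linarith
  rw [← integral_add_adjacent_intervals (hi _ (-(θ / 2))) (hi _ _),
    ← integral_add_adjacent_intervals (hi (-(θ / 2)) (θ / 2)) (hi _ _),
    integral_congr (a := -(1 / 2)) (g := fun _ => 0) fun t ht => by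
      rw [diagCdf_of_le (uIcc_of_le h₁ ▸ ht).2, mul_zero],
    integral_congr (a := -(θ / 2)) (g := fun t => p t * (t + θ / 2)) fun t ht => by
      rw [diagCdf_of_mem (uIcc_of_le h₂ ▸ ht)],
    integral_congr (a := θ / 2) (g := fun t => θ * p t) fun t ht => by
      rw [diagCdf_of_ge hθ₀ (uIcc_of_le h₃ ▸ ht).1, mul_comm],
    intervalIntegral.integral_zero, zero_add, intervalIntegral.integral_const_mul]

lemma integral_diagCdf (hθ₀ : 0 ≤ θ) (hθ₁ : θ ≤ 1) : ∫ t in 𝕀, diagCdf θ t = θ / 2 := by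
  have hsplit := integral_mul_diagCdf hθ₀ hθ₁ (p := fun _ => 1) continuous_const
  simp only [one_mul] at hsplit
  rw [setIntegral_Icc_eq_intervalIntegral (by norm_num), hsplit,
    integral_quadratic_of_eqOn (θ / 2) 1 0 fun t _ => by ring,
    integral_quadratic_of_eqOn 1 0 0 fun t _ => by ring]
  ring

lemma integral_sub_mul_diagCdf (hθ₀ : 0 ≤ θ) (hθ₁ : θ ≤ 1) :
    ∫ t in -(1 / 2)..1 / 2, (1 / 2 - t) * diagCdf θ t = θ / 8 + θ ^ 3 / 24 := by
  rw [integral_mul_diagCdf hθ₀ hθ₁ (by fun_prop),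
    integral_quadratic_of_eqOn (θ / 4) (1 / 2 - θ / 2) (-1) fun t _ => by ring,
    integral_quadratic_of_eqOn (1 / 2) (-1) 0 fun t _ => by ring]
  ring

lemma integral_diagCdf_diag (hθ : 0 ≤ θ) :
    ∫ t in Icc (-(θ / 2)) (θ / 2), diagCdf θ t = θ ^ 2 / 2 := by
  have hθ' : -(θ / 2) ≤ θ / 2 := by linarith
  rw [setIntegral_Icc_eq_intervalIntegral hθ',
    integral_quadratic_of_eqOn (θ / 2) 1 0 fun t ht => by
      rw [diagCdf_of_mem (uIcc_of_le hθ' ▸ ht)]; ring]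
  ring

lemma integral_add_one_half {c : ℝ} (hc : 0 ≤ c) : ∫ t in Icc (-c) c, (t + 1 / 2) = c := by
  rw [setIntegral_Icc_eq_intervalIntegral (by linarith),
    integral_quadratic_of_eqOn (1 / 2) 1 0 fun t _ => by ring]
  ring

end diagCdf_integrals

section expectations

variable {θ : ℝ}

lemma integral_offCdf (hθ₀ : 0 ≤ θ) (hθ₁ : θ ≤ 1) : ∫ t in 𝕀, offCdf θ t = (1 - θ) / 2 := by
  unfold offCdf
  rw [integral_sub (Continuous.integrableOn_Icc (by fun_prop))
      (Continuous.integrableOn_Icc (by fun_prop)),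
    integral_add_one_half (by norm_num), integral_diagCdf hθ₀ hθ₁]
  ring

lemma integrable_ALmeasure0 {f : ℝ × ℝ → ℝ} (hf : Continuous f) : Integrable f ALmeasure0 :=
  hf.continuousOn.integrableOn_compact (isCompact_Icc.prod isCompact_Icc)

lemma integral_mul_ALmeasure0 (f g : ℝ → ℝ) :
    ∫ p, f p.1 * g p.2 ∂ALmeasure0 = (∫ t in 𝕀, f t) * ∫ t in 𝕀, g t := by
  rw [ALmeasure0_eq_prod, integral_prod_mul]

lemma integral_diagCdf_min_ALmeasure0 (hθ₀ : 0 ≤ θ) (hθ₁ : θ ≤ 1) :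
    ∫ p, diagCdf θ (min p.1 p.2) ∂ALmeasure0 = θ / 4 + θ ^ 3 / 12 := by
  have hint := integrable_ALmeasure0 (by fun_prop : Continuous fun p : ℝ × ℝ =>
    diagCdf θ (min p.1 p.2))
  rw [ALmeasure0_eq_prod] at hint ⊢
  rw [integral_prod _ hint]
  simp only [setIntegral_Icc_eq_intervalIntegral (show -(1 / 2 : ℝ) ≤ 1 / 2 by norm_num)]
  rw [integral_integral_comp_min (continuous_diagCdf θ) (by norm_num),
    integral_sub_mul_diagCdf hθ₀ hθ₁]
  ring

theorem integral_ALassoc_ALmeasure0 (hθ₀ : 0 ≤ θ) (hθ₁ : θ < 1) :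
    ∫ p, ALassoc θ p ∂ALmeasure0 = θ ^ 3 / 12 := by
  have hint : ∀ f : ℝ × ℝ → ℝ, Continuous f → Integrable f ALmeasure0 :=
    fun _ => integrable_ALmeasure0
  have hae : ALassoc θ =ᵐ[ALmeasure0] assocFormula θ :=
    ae_restrict_of_forall_mem (measurableSet_Icc.prod measurableSet_Icc)
      fun p hp => ALassoc_eq_assocFormula hθ₁ hp
  rw [integral_congr_ae hae]
  unfold assocFormula
  rw [integral_sub (hint _ (by fun_prop)) (hint _ (by fun_prop)),
    integral_add (hint _ (by fun_prop)) (hint _ (by fun_prop)), integral_div,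
    integral_mul_ALmeasure0, integral_mul_ALmeasure0 (· + 1 / 2) (· + 1 / 2),
    integral_offCdf hθ₀ hθ₁.le,
    integral_add_one_half (by norm_num), integral_diagCdf_min_ALmeasure0 hθ₀ hθ₁.le]
  field_simp [show (1 : ℝ) - θ ≠ 0 by linarith]
  ring

lemma measurableSet_offSupport : MeasurableSet (offSupport θ) :=
  measurableSet_Icc.diff measurableSet_Icc

lemma integrableOn_offSupport {f : ℝ → ℝ} (hf : Continuous f) : IntegrableOn f (offSupport θ) :=
  hf.integrableOn_Icc.mono_set sdiff_subset

lemma integrableOn_offSupport_prod {f : ℝ × ℝ → ℝ} (hf : Continuous f) :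
    IntegrableOn f (offSupport θ ×ˢ offSupport θ) :=
  (hf.continuousOn.integrableOn_compact (isCompact_Icc.prod isCompact_Icc)).mono_set
    (prod_mono sdiff_subset sdiff_subset)

lemma ae_mem_square_ALmeasure (hθ : θ ≤ 1) : ∀ᵐ p ∂ALmeasure θ, p ∈ 𝕀 ×ˢ 𝕀 := by
  have hsub : Icc (-(θ / 2)) (θ / 2) ⊆ 𝕀 := Icc_subset_Icc (by linarith) (by linarith)
  rw [ALmeasure_eq, ae_add_measure_iff]
  refine ⟨Measure.ae_smul_measure (ae_restrict_of_forall_mem (measurableSet_offSupport.prod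
      measurableSet_offSupport) fun p hp => ⟨hp.1.1, hp.2.1⟩) _,
    (ae_map_iff (by fun_prop) (measurableSet_Icc.prod measurableSet_Icc)).mpr ?_⟩
  exact ae_restrict_of_forall_mem measurableSet_Icc fun u hu => ⟨hsub hu, hsub hu⟩

lemma integral_ALmeasure (hθ : θ < 1) {f : ℝ × ℝ → ℝ} (hf : Continuous f) :
    ∫ p, f p ∂ALmeasure θ = (1 - θ)⁻¹ * (∫ p in offSupport θ ×ˢ offSupport θ, f p)
      + ∫ u in Icc (-(θ / 2)) (θ / 2), f (u, u) := by
  have hdiag : Measurable fun u : ℝ => (u, u) := by fun_prop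
  have hon : Integrable f (Measure.map (fun u : ℝ => (u, u)) (volume.restrict
      (Icc (-(θ / 2)) (θ / 2)))) :=
    (integrable_map_measure hf.aestronglyMeasurable hdiag.aemeasurable).mpr
      (hf.comp (by fun_prop)).integrableOn_Icc
  rw [ALmeasure_eq,
    integral_add_measure ((integrableOn_offSupport_prod hf).smul_measure (by finiteness)) hon,
    integral_smul_measure, integral_map hdiag.aemeasurable hf.aestronglyMeasurable,
    ENNReal.toReal_inv, ENNReal.toReal_ofReal (by linarith), smul_eq_mul]

lemma diagCdf_min_of_mem_offSupport (hθ : 0 < θ) {x y : ℝ} (hx : x ∈ offSupport θ)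
    (hy : y ∈ offSupport θ) : diagCdf θ (min x y) = diagCdf θ x * diagCdf θ y / θ := by
  have hside : ∀ {u}, u ∈ offSupport θ → u < -(θ / 2) ∨ θ / 2 < u := fun hu => by
    simpa only [mem_Icc, not_and_or, not_le] using hu.2
  rcases hside hx with hx | hx
  · rw [diagCdf_of_le ((min_le_left x y).trans hx.le), diagCdf_of_le hx.le, zero_mul, zero_div]
  rcases hside hy with hy | hy
  · rw [diagCdf_of_le ((min_le_right x y).trans hy.le), diagCdf_of_le hy.le, mul_zero, zero_div]
  rw [diagCdf_of_ge hθ.le (le_min hx.le hy.le), diagCdf_of_ge hθ.le hx.le,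
    diagCdf_of_ge hθ.le hy.le, mul_div_cancel_right₀ _ hθ.ne']

lemma setIntegral_offSupport (hθ : θ ≤ 1) {f : ℝ → ℝ} (hf : Continuous f) :
    ∫ t in offSupport θ, f t = (∫ t in 𝕀, f t) - ∫ t in Icc (-(θ / 2)) (θ / 2), f t :=
  setIntegral_sdiff measurableSet_Icc hf.integrableOn_Icc
    (Icc_subset_Icc (by linarith) (by linarith))

lemma integral_assocFormula_offSupport (hθ₀ : 0 < θ) (hθ₁ : θ < 1) :
    ∫ p in offSupport θ ×ˢ offSupport θ, assocFormula θ p = 0 := by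
  have hF : ∫ t in offSupport θ, (t + 1 / 2) = (1 - θ) / 2 := by
    rw [setIntegral_offSupport hθ₁.le (by fun_prop), integral_add_one_half (by norm_num),
      integral_add_one_half (by linarith)]
    ring
  have hH : ∫ t in offSupport θ, diagCdf θ t = θ * (1 - θ) / 2 := by
    rw [setIntegral_offSupport hθ₁.le (by fun_prop), integral_diagCdf hθ₀.le hθ₁.le,
      integral_diagCdf_diag hθ₀.le]
    ring
  have hG : ∫ t in offSupport θ, offCdf θ t = (1 - θ) ^ 2 / 2 := by
    unfold offCdf
    rw [integral_sub (integrableOn_offSupport (by fun_prop))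
      (integrableOn_offSupport (by fun_prop)), hF, hH]
    ring
  rw [setIntegral_congr_fun (measurableSet_offSupport.prod measurableSet_offSupport) fun p hp => by
    rw [assocFormula, diagCdf_min_of_mem_offSupport hθ₀ hp.1 hp.2]]
  have hint : ∀ f : ℝ × ℝ → ℝ, Continuous f → IntegrableOn f (offSupport θ ×ˢ offSupport θ) :=
    fun _ => integrableOn_offSupport_prod
  rw [integral_sub (hint _ (by fun_prop)) (hint _ (by fun_prop)),
    integral_add (hint _ (by fun_prop)) (hint _ (by fun_prop)), integral_div, integral_div,
    Measure.volume_eq_prod, ← Measure.prod_restrict, integral_prod_mul, integral_prod_mul,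
    integral_prod_mul (· + 1 / 2) (· + 1 / 2), hF, hG, hH]
  field_simp [show (1 : ℝ) - θ ≠ 0 by linarith]
  ring

lemma integral_assocFormula_diag (hθ₀ : 0 ≤ θ) (hθ₁ : θ < 1) :
    ∫ u in Icc (-(θ / 2)) (θ / 2), assocFormula θ (u, u) = (3 - θ) * θ ^ 2 / 12 := by
  have hθ : -(θ / 2) ≤ θ / 2 := by linarith
  rw [setIntegral_Icc_eq_intervalIntegral hθ,
    integral_quadratic_of_eqOn (θ / 4) 0 (-1) fun u hu => by
      rw [assocFormula, offCdf, min_self, diagCdf_of_mem (uIcc_of_le hθ ▸ hu)]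
      field_simp [show (1 : ℝ) - θ ≠ 0 by linarith]
      ring]
  ring

theorem integral_ALassoc_ALmeasure (hθ₀ : 0 < θ) (hθ₁ : θ < 1) :
    ∫ p, ALassoc θ p ∂ALmeasure θ = (3 - θ) * θ ^ 2 / 12 := by
  rw [integral_congr_ae ((ae_mem_square_ALmeasure hθ₁.le).mono
      fun p hp => ALassoc_eq_assocFormula hθ₁ hp),
    integral_ALmeasure hθ₁ (continuous_assocFormula θ),
    integral_assocFormula_offSupport hθ₀ hθ₁, integral_assocFormula_diag hθ₀.le hθ₁]
  ring

end expectations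

lemma tendsto_sub_div_self_nhdsGT_zero {c : ℝ} (hc : 0 < c) :
    Tendsto (fun t : ℝ => (c - t) / t) (𝓝[>] 0) atTop := by
  refine (tendsto_atTop_add_const_right _ (-1)
    (tendsto_inv_nhdsGT_zero.const_mul_atTop hc)).congr' ?_
  filter_upwards [self_mem_nhdsWithin] with t ht
  field_simp [ht.out.ne']
  ring

/-- In the MICD AL model, `E_0[a_θ(X,Y)] = θ³/12` and
`E_θ[a_θ(X,Y)] = (3-θ)·θ²/12` for `θ ∈ (0,1)`, so
`E_θ[a_θ]/E_0[a_θ] = (3-θ)/θ → ∞` as `θ ↓ 0`. -/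
theorem stmt19 (θ : ℝ) (hθ : θ ∈ Ioo (0:ℝ) 1) :
    (∫ p, ALassoc θ p ∂ALmeasure0 = θ^3 / 12)
    ∧ (∫ p, ALassoc θ p ∂(ALmeasure θ) = (3 - θ) * θ^2 / 12)
    ∧ ((∫ p, ALassoc θ p ∂(ALmeasure θ)) / ∫ p, ALassoc θ p ∂ALmeasure0 = (3 - θ) / θ)
    ∧ Tendsto (fun t : ℝ => (3 - t) / t) (𝓝[>] (0:ℝ)) atTop := by
  obtain ⟨hθ₀, hθ₁⟩ := hθ
  have h₀ := integral_ALassoc_ALmeasure0 hθ₀.le hθ₁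
  have h₁ := integral_ALassoc_ALmeasure hθ₀ hθ₁
  refine ⟨h₀, h₁, ?_, tendsto_sub_div_self_nhdsGT_zero three_pos⟩
  rw [h₀, h₁]
  field_simp
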